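/- For every pair of positive integers k, ℓ with k ≥ 4, there exists a positive integer N = N(k,ℓ) such that for every integer n ≥ N, rx_{k,ℓ}(K_{n,n}) = k + 1. -/

import Mathlib

open SimpleGraph

/-- `T` is a rainbow `S`-tree in `G` under edge-coloring `c`:
its vertices contain `S`, it is a tree, and `c` is injective on its edges. -/
def IsRainbowSTree {V β : Type*} (G : SimpleGraph V) (c : Sym2 V → β)
    (S : Set V) (T : G.Subgraph) : Prop :=
  S ⊆ T.verts ∧ T.coe.IsTree ∧ Set.InjOn c T.edgeSet

/-- A family of `S`-trees is internally disjoint: pairwise edge-disjoint, and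
the vertex sets of two distinct members meet exactly in `S`. -/
def InternallyDisjoint {V : Type*} {G : SimpleGraph V} (S : Set V)
    {ι : Type*} (T : ι → G.Subgraph) : Prop :=
  ∀ i j, i ≠ j → (T i).edgeSet ∩ (T j).edgeSet = ∅ ∧ (T i).verts ∩ (T j).verts = S

/-- The coloring `c` provides, for every set `S` of `k` vertices,
`ℓ` internally disjoint rainbow `S`-trees. -/
def HasRainbowSTrees {V β : Type*} (G : SimpleGraph V) (c : Sym2 V → β) (k ℓ : ℕ) : Prop :=
  ∀ S : Finset V, S.card = k →
    ∃ T : Fin ℓ → G.Subgraph,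
      (∀ i, IsRainbowSTree G c (S : Set V) (T i)) ∧ InternallyDisjoint (S : Set V) T

/-- The `(k,ℓ)`-rainbow index `rx_{k,ℓ}(G)`: the minimum number `t` of colors such that
some edge-coloring of `G` with `t` colors gives, for every `k`-set `S`,
`ℓ` internally disjoint rainbow `S`-trees. -/
noncomputable def rainbowIndex {V : Type*} (G : SimpleGraph V) (k ℓ : ℕ) : ℕ :=
  sInf {t : ℕ | ∃ c : Sym2 V → Fin t, HasRainbowSTrees G c k ℓ}


/-!
Lower bound: given a colouring with at most `k` colours, pigeonhole on the colours of the edges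
from each left vertex to `k + 1` fixed right vertices yields `k - 2` left vertices `C` and two
right vertices `v, w` with all edges between `C` and `{v, w}` of one colour. A rainbow tree through
`S = C ∪ {v, w}` has at most `k` edges, hence at most one vertex outside `S`, and uses at most one
edge between `C` and `{v, w}`; for `k ≥ 4` that leaves too few edges to connect `S`.

Upper bound: for a `k`-set `S`, any `n - k` pairs of centres `x, y ∉ S` (all distinct) give
internally disjoint double stars: `x` joined to `y` and to the right vertices of `S`, `y` joined
to the left vertices of `S`. Each has `k + 1` edges, so under a uniformly random colouring with
`k + 1` colours it is rainbow with probability `(k+1)! / (k+1)^(k+1)`, independently for the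
different pairs. Fewer than `ℓ` of them are rainbow with probability exponentially small in `n`,
which beats the `(2n choose k)` choices of `S`; the counting form of this union bound produces
the colouring.
-/

open SimpleGraph Sum Finset

section CompleteBipartite

variable {α β γ : Type*}

def crossEdge (p : α × β) : Sym2 (α ⊕ β) := s(inl p.1, inr p.2)

lemma crossEdge_injective : Function.Injective (crossEdge : α × β → Sym2 (α ⊕ β)) := by
  rintro ⟨a, b⟩ ⟨a', b'⟩ h
  simpa [crossEdge] using h

/-- `d` is only used on non-edges, i.e. pairs of vertices on the same side. -/
def crossColoring (M : α × β → γ) (d : γ) : Sym2 (α ⊕ β) → γ :=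
  Sym2.lift ⟨fun u v => match u, v with
    | inl a, inr b => M (a, b)
    | inr b, inl a => M (a, b)
    | _, _ => d, by
      rintro (a | b) (a' | b') <;> rfl⟩

end CompleteBipartite

namespace SimpleGraph.Subgraph

variable {V : Type*} {G : SimpleGraph V}

lemma ncard_edgeSet_coe (T : G.Subgraph) : T.coe.edgeSet.ncard = T.edgeSet.ncard := by
  rw [← T.image_coe_edgeSet_coe, Set.ncard_image_of_injective _
    (Sym2.map.injective Subtype.val_injective)]

lemma coe_isTree_iff {T : G.Subgraph} [Finite T.verts] :
    T.coe.IsTree ↔ T.coe.Connected ∧ T.edgeSet.ncard + 1 = T.verts.ncard := by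
  rw [isTree_iff_connected_and_card, Nat.card_coe_set_eq, Nat.card_coe_set_eq,
    ncard_edgeSet_coe]

lemma edgeSet_eq_image_crossEdge {α β : Type*} (T : (completeBipartiteGraph α β).Subgraph) :
    T.edgeSet = crossEdge '' {p | T.Adj (inl p.1) (inr p.2)} := by
  ext e
  induction e using Sym2.ind with
  | _ u v =>
    refine ⟨fun h => ?_, ?_⟩
    · rcases u with a | b <;> rcases v with a' | b'
      · simpa using T.adj_sub h
      · exact ⟨(a, b'), h, rfl⟩
      · exact ⟨(a', b), h.symm, Sym2.eq_swap⟩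
      · simpa using T.adj_sub h
    · rintro ⟨p, hp, hpe⟩
      rw [← hpe]
      exact hp

end SimpleGraph.Subgraph

section DoubleStar

variable {α β γ : Type*} [DecidableEq α] [DecidableEq β]

def doubleStarPairs (S : Finset (α ⊕ β)) (x : α) (y : β) : Finset (α × β) :=
  insert x S.toLeft ×ˢ {y} ∪ {x} ×ˢ S.toRight

variable {S : Finset (α ⊕ β)} {x x' : α} {y y' : β}

lemma mem_doubleStarPairs {p : α × β} :
    p ∈ doubleStarPairs S x y ↔
      (p.1 = x ∨ inl p.1 ∈ S) ∧ p.2 = y ∨ p.1 = x ∧ inr p.2 ∈ S := by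
  simp only [doubleStarPairs, mem_union, mem_product, mem_insert, mem_singleton, mem_toLeft,
    mem_toRight]

lemma card_doubleStarPairs (hx : inl x ∉ S) (hy : inr y ∉ S) :
    #(doubleStarPairs S x y) = #S + 1 := by
  rw [doubleStarPairs, card_union_of_disjoint, card_product, card_product, card_insert_of_notMem,
    card_singleton, card_singleton, ← card_toLeft_add_card_toRight]
  · ring
  · simpa using hx
  · simp only [Finset.disjoint_left, mem_product, mem_singleton, mem_toRight]
    rintro p ⟨-, rfl⟩ ⟨-, hp⟩
    exact hy hp

lemma disjoint_doubleStarPairs (hy : inr y ∉ S) (hy' : inr y' ∉ S) (hxx' : x ≠ x')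
    (hyy' : y ≠ y') :
    Disjoint (doubleStarPairs S x y) (doubleStarPairs S x' y') := by
  rw [Finset.disjoint_left]
  rintro ⟨a, b⟩ h h'
  rw [mem_doubleStarPairs] at h h'
  rcases h with ⟨-, rfl⟩ | ⟨rfl, hb⟩ <;> rcases h' with ⟨-, rfl⟩ | ⟨rfl, hb'⟩
  exacts [hyy' rfl, hy hb', hy' hb, hxx' rfl]

/-- The double star with adjacent centres `inl x` and `inr y`, each vertex of `S` being a leaf
attached to the centre on the other side. -/
def doubleStar (S : Finset (α ⊕ β)) (x : α) (y : β) :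
    (completeBipartiteGraph α β).Subgraph where
  verts := insert (inl x) (insert (inr y) ↑S)
  Adj u v := ∃ p ∈ doubleStarPairs S x y, s(u, v) = crossEdge p
  adj_sub := by
    rintro u v ⟨p, -, h⟩
    rcases Sym2.eq_iff.1 h with ⟨rfl, rfl⟩ | ⟨rfl, rfl⟩ <;> simp
  edge_vert := by
    rintro u v ⟨⟨a, b⟩, hp, h⟩
    rw [mem_doubleStarPairs] at hp
    rcases Sym2.eq_iff.1 h with ⟨rfl, rfl⟩ | ⟨rfl, rfl⟩ <;> simp only at hp ⊢ <;>
      rcases hp with ⟨ha | ha, rfl⟩ | ⟨rfl, hb⟩ <;> simp [*]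
  symm := ⟨fun _ _ ⟨p, hp, h⟩ => ⟨p, hp, Sym2.eq_swap.trans h⟩⟩

lemma doubleStar_adj_inl_inr {a : α} {b : β} :
    (doubleStar S x y).Adj (inl a) (inr b) ↔ (a, b) ∈ doubleStarPairs S x y :=
  ⟨fun ⟨_, hp, h⟩ => crossEdge_injective (a₁ := (a, b)) h ▸ hp,
    fun h => ⟨_, h, rfl⟩⟩

lemma doubleStar_edgeSet :
    (doubleStar S x y).edgeSet = crossEdge '' ↑(doubleStarPairs S x y) := by
  ext e
  induction e using Sym2.ind with
  | _ u v =>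
    exact ⟨fun ⟨p, hp, h⟩ => ⟨p, hp, h.symm⟩, fun ⟨p, hp, h⟩ => ⟨p, hp, h.symm⟩⟩

lemma doubleStar_connected : (doubleStar S x y).coe.Connected := by
  have hy : inr y ∈ (doubleStar S x y).verts := by simp [doubleStar]
  have hxy : (doubleStar S x y).Adj (inl x) (inr y) :=
    doubleStar_adj_inl_inr.2 (by simp [mem_doubleStarPairs])
  have reach : ∀ u (hu : u ∈ (doubleStar S x y).verts),
      (doubleStar S x y).coe.Reachable ⟨u, hu⟩ ⟨_, hy⟩ := by
    rintro u (rfl | rfl | hu)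
    · exact hxy.coe.reachable
    · rfl
    · rcases u with a | b
      · have hay : (doubleStar S x y).Adj (inl a) (inr y) :=
          doubleStar_adj_inl_inr.2 (by simp [mem_doubleStarPairs, mem_coe.1 hu])
        exact hay.coe.reachable
      · have hbx : (doubleStar S x y).Adj (inr b) (inl x) :=
          (doubleStar_adj_inl_inr.2 (by simp [mem_doubleStarPairs, mem_coe.1 hu])).symm
        exact hbx.coe.reachable.trans hxy.coe.reachable
  have : Nonempty (doubleStar S x y).verts := ⟨⟨_, hy⟩⟩
  exact .mk fun u v => (reach u.1 u.2).trans (reach v.1 v.2).symm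

lemma doubleStar_isTree (hx : inl x ∉ S) (hy : inr y ∉ S) : (doubleStar S x y).coe.IsTree := by
  have : Finite (doubleStar S x y).verts := ((S.finite_toSet.insert _).insert _).to_subtype
  refine Subgraph.coe_isTree_iff.2 ⟨doubleStar_connected, ?_⟩
  rw [doubleStar_edgeSet, Set.ncard_image_of_injective _ crossEdge_injective, Set.ncard_coe_finset,
    card_doubleStarPairs hx hy, doubleStar, Set.ncard_insert_of_notMem (by simpa using hx),
    Set.ncard_insert_of_notMem (by simpa using hy), Set.ncard_coe_finset]

lemma doubleStar_verts_inter (hx : inl x ∉ S) (hy : inr y ∉ S) (hxx' : x ≠ x')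
    (hyy' : y ≠ y') :
    (doubleStar S x y).verts ∩ (doubleStar S x' y').verts = ↑S := by
  ext u
  simp only [doubleStar, Set.mem_inter_iff, Set.mem_insert_iff, Finset.mem_coe]
  constructor
  · rintro ⟨rfl | rfl | hu, hu'⟩ <;> simp_all
  · exact fun hu => ⟨.inr (.inr hu), .inr (.inr hu)⟩

lemma hasRainbowSTrees_crossColoring {M : α × β → γ} (d : γ) {k ℓ : ℕ}
    (h : ∀ S : Finset (α ⊕ β), #S = k → ∃ x : Fin ℓ ↪ α, ∃ y : Fin ℓ ↪ β,
      ∀ j, inl (x j) ∉ S ∧ inr (y j) ∉ S ∧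
        Set.InjOn M ↑(doubleStarPairs S (x j) (y j))) :
    HasRainbowSTrees (completeBipartiteGraph α β) (crossColoring M d) k ℓ := by
  intro S hS
  obtain ⟨x, y, hxy⟩ := h S hS
  refine ⟨fun j => doubleStar S (x j) (y j),
    fun j => ⟨?_, doubleStar_isTree (hxy j).1 (hxy j).2.1, ?_⟩, fun i j hij => ⟨?_, ?_⟩⟩
  · exact (Set.subset_insert _ _).trans (Set.subset_insert _ _)
  · rw [doubleStar_edgeSet]
    exact Set.InjOn.image_of_comp (hxy j).2.2
  · rw [doubleStar_edgeSet, doubleStar_edgeSet, ← Set.image_inter crossEdge_injective,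
      ← coe_inter,
      disjoint_iff_inter_eq_empty.1 (disjoint_doubleStarPairs (hxy i).2.1 (hxy j).2.1
        (x.injective.ne hij) (y.injective.ne hij)), coe_empty, Set.image_empty]
  · exact doubleStar_verts_inter (hxy i).1 (hxy i).2.1 (x.injective.ne hij) (y.injective.ne hij)

end DoubleStar

section Counting

variable {E γ : Type*} [Fintype E] [DecidableEq E] [Fintype γ] [DecidableEq γ]

lemma card_filter_not_injective (X : Type*) [Fintype X] [DecidableEq X] :
    #{g : X → γ | ¬ Function.Injective g} =
      Fintype.card γ ^ Fintype.card X - (Fintype.card γ).descFactorial (Fintype.card X) := by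
  have hinj : #{g : X → γ | Function.Injective g} =
      (Fintype.card γ).descFactorial (Fintype.card X) := by
    rw [← Fintype.card_subtype, Fintype.card_congr (Equiv.subtypeInjectiveEquivEmbedding X γ),
      Fintype.card_embedding_eq]
  rw [← hinj, ← Fintype.card_fun, ← card_univ, ← card_filter_add_card_filter_not
    (s := univ) (fun g : X → γ => Function.Injective g), Nat.add_sub_cancel_left]

/-- A colouring that fails to be injective on each of `#Fs` disjoint `b`-sets is determined by its
restrictions to these sets, each non-injective, and by its values off their union. -/
lemma card_forall_not_injOn_le {τ : Type*} [DecidableEq τ] (Fs : Finset τ) (B : τ → Finset E)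
    {b : ℕ} (hdisj : (Fs : Set τ).PairwiseDisjoint B) (hB : ∀ t ∈ Fs, #(B t) = b) :
    #{M : E → γ | ∀ t ∈ Fs, ¬ Set.InjOn M ↑(B t)} ≤
      (Fintype.card γ ^ b - (Fintype.card γ).descFactorial b) ^ #Fs *
        Fintype.card γ ^ (Fintype.card E - b * #Fs) := by
  set U := Fs.biUnion B
  set bad : Finset (E → γ) := {M | ∀ t ∈ Fs, ¬ Set.InjOn M ↑(B t)}
  have hU : #U = b * #Fs := by
    rw [card_biUnion hdisj, sum_congr rfl hB, sum_const, smul_eq_mul, mul_comm]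
  let R : (E → γ) → ((t : Fs) → (B t → γ)) × ({e // e ∉ U} → γ) :=
    fun M => (fun _ e => M e, fun e => M e)
  have hmaps : Set.MapsTo R ↑bad
      ↑(Fintype.piFinset (fun t : Fs => ({g | ¬ Function.Injective g} : Finset (B t → γ)))
        ×ˢ (univ : Finset ({e // e ∉ U} → γ))) := by
    intro M hM
    have hM := (mem_filter.1 (mem_coe.1 hM)).2
    exact mem_coe.2 <| mem_product.2 ⟨Fintype.mem_piFinset.2 fun t => mem_filter.2
      ⟨mem_univ _, fun h => hM t.1 t.2 (Set.injOn_iff_injective.2 h)⟩, mem_univ _⟩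
  have hinj : Set.InjOn R ↑bad := by
    intro M _ M' _ h
    funext e
    by_cases he : e ∈ U
    · obtain ⟨t, ht, heB⟩ := mem_biUnion.1 he
      exact congrFun (congrFun (congrArg Prod.fst h) ⟨t, ht⟩) ⟨e, heB⟩
    · exact congrFun (congrArg Prod.snd h) ⟨e, he⟩
  refine (card_le_card_of_injOn R hmaps hinj).trans_eq ?_
  rw [card_product, Fintype.card_piFinset, card_univ, Fintype.card_fun,
    Fintype.card_subtype_compl, Fintype.card_coe, hU]
  simp only [card_filter_not_injective, Fintype.card_coe]
  rw [prod_congr rfl fun t _ => by rw [hB t t.2], prod_const, card_univ, Fintype.card_coe]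

/-- The union bound over `i` and over the `(m + 1 - ℓ)`-sets of indices `t` that fail. -/
lemma exists_forall_le_card_filter_injOn {ι : Type*} [Fintype ι] {m b ℓ : ℕ}
    (B : ι → Fin m → Finset E) (hdisj : ∀ i, Pairwise (Function.onFun Disjoint (B i)))
    (hB : ∀ i t, #(B i t) = b)
    (hcount : Fintype.card ι * (m.choose (m + 1 - ℓ) *
      ((Fintype.card γ ^ b - (Fintype.card γ).descFactorial b) ^ (m + 1 - ℓ) *
        Fintype.card γ ^ (Fintype.card E - b * (m + 1 - ℓ)))) <
      Fintype.card γ ^ Fintype.card E) :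
    ∃ M : E → γ, ∀ i, ℓ ≤ #{t | Set.InjOn M ↑(B i t)} := by
  by_contra! h
  have hcover : (univ : Finset (E → γ)) ⊆ univ.biUnion fun i =>
      (powersetCard (m + 1 - ℓ) univ).biUnion
        fun Fs => {M : E → γ | ∀ t ∈ Fs, ¬ Set.InjOn M ↑(B i t)} := by
    intro M _
    obtain ⟨i, hi⟩ := h M
    have hbad : m + 1 - ℓ ≤ #{t | ¬ Set.InjOn M ↑(B i t)} := by
      have := card_filter_add_card_filter_not (s := univ) fun t => Set.InjOn M ↑(B i t)
      rw [card_univ, Fintype.card_fin] at this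
      omega
    obtain ⟨Fs, hFs, hcard⟩ := exists_subset_card_eq hbad
    simp only [mem_biUnion, mem_univ, true_and, mem_powersetCard, subset_univ, mem_filter]
    exact ⟨i, Fs, hcard, fun t ht => (mem_filter.1 (hFs ht)).2⟩
  have hbound : ∀ i, ∀ Fs ∈ powersetCard (m + 1 - ℓ) (univ : Finset (Fin m)),
      #{M : E → γ | ∀ t ∈ Fs, ¬ Set.InjOn M ↑(B i t)} ≤
        (Fintype.card γ ^ b - (Fintype.card γ).descFactorial b) ^ (m + 1 - ℓ) *
          Fintype.card γ ^ (Fintype.card E - b * (m + 1 - ℓ)) := by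
    intro i Fs hFs
    rw [← (mem_powersetCard.1 hFs).2]
    convert card_forall_not_injOn_le (γ := γ) Fs (B i) (fun t _ t' _ htt' => hdisj i htt')
      fun t _ => hB i t
  have hle := (card_le_card hcover).trans <| card_biUnion_le.trans <| sum_le_card_nsmul _ _ _
    fun i _ => card_biUnion_le.trans <| sum_le_card_nsmul _ _ _ (hbound i)
  simp only [card_univ, Fintype.card_fun, card_powersetCard, Fintype.card_fin, smul_eq_mul] at hle
  exact hle.not_gt hcount

end Counting

section LowerBound

variable {α β γ : Type*} [Fintype α] [Fintype β] [Fintype γ]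

lemma exists_monochromatic_prod_pair (c : Sym2 (α ⊕ β) → γ) {m : ℕ}
    (hβ : Fintype.card γ < Fintype.card β)
    (hα : Fintype.card γ ^ (Fintype.card γ + 1) * m < Fintype.card α) :
    ∃ C : Finset α, #C = m ∧ ∃ v w : β, v ≠ w ∧
      ∃ c₀, ∀ i ∈ C, c s(inl i, inr v) = c₀ ∧ c s(inl i, inr w) = c₀ := by
  classical
  obtain ⟨e⟩ : Nonempty (Fin (Fintype.card γ + 1) ↪ β) :=
    Function.Embedding.nonempty_of_card_le (by simpa using hβ)
  let F : α → Fin (Fintype.card γ + 1) → γ := fun i t => c s(inl i, inr (e t))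
  obtain ⟨P, -, hP⟩ := exists_lt_card_fiber_of_mul_lt_card_of_maps_to (s := univ) (t := univ)
    (f := F) (fun _ _ => mem_univ _) (by simpa using hα)
  obtain ⟨C, hCP, hC⟩ := exists_subset_card_eq hP.le
  obtain ⟨t, t', htt', hPt⟩ := Fintype.exists_ne_map_eq_of_card_lt P (by simp)
  refine ⟨C, hC, e t, e t', e.injective.ne htt', P t, fun i hi => ?_⟩
  have hFi : F i = P := (mem_filter.1 (hCP hi)).2
  exact ⟨congrFun hFi t, (congrFun hFi t').trans hPt.symm⟩

/-- A rainbow tree through `C ∪ {v, w}` uses at most one of the equally coloured edges between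
`C` and `{v, w}`, too few to connect `C` to `{v, w}` within `#C + 3` vertices. -/
lemma not_isRainbowSTree_disjSum [DecidableEq β] (c : Sym2 (α ⊕ β) → γ) {C : Finset α}
    {v w : β} {c₀ : γ} (hC : 2 ≤ #C) (hγ : Fintype.card γ ≤ #C + 2) (hvw : v ≠ w)
    (hmono : ∀ i ∈ C, c s(inl i, inr v) = c₀ ∧ c s(inl i, inr w) = c₀)
    (T : (completeBipartiteGraph α β).Subgraph) :
    ¬ IsRainbowSTree (completeBipartiteGraph α β) c ↑(C.disjSum {v, w}) T := by
  classical
  rintro ⟨hS, htree, hrainbow⟩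
  set Vt := T.verts.toFinset
  obtain ⟨hCL, hvwR⟩ : C ⊆ Vt.toLeft ∧ {v, w} ⊆ Vt.toRight :=
    disjSum_subset.1 fun u hu => Set.mem_toFinset.2 (hS (mem_coe.2 hu))
  set P := (Vt.toLeft ×ˢ Vt.toRight).filter fun p => T.Adj (inl p.1) (inr p.2)
  have hE : T.edgeSet.ncard = #P := by
    rw [T.edgeSet_eq_image_crossEdge, Set.ncard_image_of_injective _ crossEdge_injective,
      ← Set.ncard_coe_finset]
    congr
    ext p
    simpa [P, Vt] using fun h : T.Adj (inl p.1) (inr p.2) => ⟨T.edge_vert h, T.edge_vert h.symm⟩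
  have hV : T.verts.ncard = #Vt.toLeft + #Vt.toRight := by
    rw [card_toLeft_add_card_toRight, Set.ncard_eq_toFinset_card']
  have hEV := (Subgraph.coe_isTree_iff.1 htree).2
  have hEγ : T.edgeSet.ncard ≤ Fintype.card γ := by
    rw [← Nat.card_eq_fintype_card, ← Set.ncard_univ]
    exact Set.ncard_le_ncard_of_injOn c (fun _ _ => Set.mem_univ _) hrainbow
  have hmonoP : #(P ∩ C ×ˢ {v, w}) ≤ 1 := by
    have hcol : ∀ p ∈ P ∩ C ×ˢ {v, w},
        crossEdge p ∈ T.edgeSet ∧ c (crossEdge p) = c₀ := by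
      intro p hp
      simp only [P, mem_inter, mem_filter, mem_product, mem_insert, mem_singleton] at hp
      obtain ⟨⟨-, hadj⟩, hpC, rfl | rfl⟩ := hp
      exacts [⟨hadj, (hmono _ hpC).1⟩, ⟨hadj, (hmono _ hpC).2⟩]
    refine card_le_one.2 fun p hp q hq => crossEdge_injective ?_
    exact hrainbow (hcol p hp).1 (hcol q hq).1 ((hcol p hp).2.trans (hcol q hq).2.symm)
  have hrest : #(P \ C ×ˢ {v, w}) ≤ #Vt.toLeft * #Vt.toRight - #C * 2 := by
    refine (card_le_card (sdiff_subset_sdiff (filter_subset _ _) le_rfl)).trans_eq ?_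
    rw [card_sdiff_of_subset (product_subset_product hCL hvwR), card_product, card_product,
      card_pair hvw]
  have hP := card_inter_add_card_sdiff P (C ×ˢ {v, w})
  have hL := card_le_card hCL
  have hR := card_le_card hvwR
  rw [card_pair hvw] at hR
  have : #Vt.toRight ≤ 3 := by omega
  interval_cases #Vt.toRight <;> omega

lemma not_hasRainbowSTrees_completeBipartiteGraph [DecidableEq β] {k ℓ : ℕ} (hk : 4 ≤ k)
    (hℓ : 1 ≤ ℓ) (hγ : Fintype.card γ ≤ k) (hβ : k < Fintype.card β)
    (hα : k ^ (k + 1) * (k - 2) < Fintype.card α)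
    (c : Sym2 (α ⊕ β) → γ) : ¬ HasRainbowSTrees (completeBipartiteGraph α β) c k ℓ := by
  intro h
  have hpow : Fintype.card γ ^ (Fintype.card γ + 1) ≤ k ^ (k + 1) :=
    (Nat.pow_le_pow_left hγ _).trans (Nat.pow_le_pow_right (by omega) (by omega))
  obtain ⟨C, hC, v, w, hvw, c₀, hmono⟩ := exists_monochromatic_prod_pair c (m := k - 2)
    (by omega) ((Nat.mul_le_mul_right _ hpow).trans_lt hα)
  obtain ⟨T, hT, -⟩ := h (C.disjSum {v, w}) (by rw [card_disjSum, card_pair hvw]; omega)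
  exact not_isRainbowSTree_disjSum c (by omega) (by omega) hvw hmono _ (hT ⟨0, hℓ⟩)

end LowerBound

lemma exists_embedding_forall_notMem {α : Type*} [Fintype α] [DecidableEq α] (s : Finset α)
    {m : ℕ} (h : m + #s ≤ Fintype.card α) : ∃ f : Fin m ↪ α, ∀ t, f t ∉ s := by
  obtain ⟨f⟩ : Nonempty (Fin m ↪ {a // a ∉ s}) := Function.Embedding.nonempty_of_card_le (by
    rw [Fintype.card_fin, Fintype.card_subtype_compl, Fintype.card_coe]
    omega)
  exact ⟨f.trans (Function.Embedding.subtype _), fun t => (f t).2⟩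

lemma exists_coloring_hasRainbowSTrees {α β : Type*} [Fintype α] [Fintype β] [DecidableEq α]
    [DecidableEq β] {k ℓ m : ℕ} (hα : m + k ≤ Fintype.card α)
    (hβ : m + k ≤ Fintype.card β)
    (hcount : (Fintype.card α + Fintype.card β).choose k * (m.choose (m + 1 - ℓ) *
      (((k + 1) ^ (k + 1) - (k + 1).descFactorial (k + 1)) ^ (m + 1 - ℓ) *
        (k + 1) ^ (Fintype.card α * Fintype.card β - (k + 1) * (m + 1 - ℓ)))) <
      (k + 1) ^ (Fintype.card α * Fintype.card β)) :
    ∃ c : Sym2 (α ⊕ β) → Fin (k + 1),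
      HasRainbowSTrees (completeBipartiteGraph α β) c k ℓ := by
  have hx : ∀ S : {S : Finset (α ⊕ β) // #S = k},
      ∃ x : Fin m ↪ α, ∀ t, inl (x t) ∉ S.1 := by
    intro S
    obtain ⟨x, hx⟩ := exists_embedding_forall_notMem S.1.toLeft (m := m)
      (by have := card_toLeft_le (u := S.1); omega)
    exact ⟨x, fun t => by simpa using hx t⟩
  have hy : ∀ S : {S : Finset (α ⊕ β) // #S = k},
      ∃ y : Fin m ↪ β, ∀ t, inr (y t) ∉ S.1 := by
    intro S
    obtain ⟨y, hy⟩ := exists_embedding_forall_notMem S.1.toRight (m := m)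
      (by have := card_toRight_le (u := S.1); omega)
    exact ⟨y, fun t => by simpa using hy t⟩
  choose x hx using hx
  choose y hy using hy
  obtain ⟨M, hM⟩ := exists_forall_le_card_filter_injOn (γ := Fin (k + 1))
    (fun S t => doubleStarPairs S.1 (x S t) (y S t))
    (fun S t t' htt' => disjoint_doubleStarPairs (hy S t) (hy S t') ((x S).injective.ne htt')
      ((y S).injective.ne htt'))
    (fun S t => by rw [card_doubleStarPairs (hx S t) (hy S t), S.2])
    (by simpa [Fintype.card_finset_len] using hcount)
  refine ⟨crossColoring M 0, hasRainbowSTrees_crossColoring 0 fun S hS => ?_⟩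
  let e := orderEmbOfCardLe _ (hM ⟨S, hS⟩)
  exact ⟨e.toEmbedding.trans (x ⟨S, hS⟩), e.toEmbedding.trans (y ⟨S, hS⟩),
    fun j => ⟨hx _ _, hy _ _, (mem_filter.1 (orderEmbOfCardLe_mem _ (hM ⟨S, hS⟩) j)).2⟩⟩

lemma eventually_mul_pow_mul_pow_sub_lt {a b : ℕ} (hb : 0 < b) (hab : b < a) (c d K : ℕ) :
    ∀ᶠ n in Filter.atTop, c * n ^ d * b ^ (n - K) < a ^ (n - K) := by
  set r : ℝ := b / a
  have ha : (0 : ℝ) < a := by exact_mod_cast hb.trans hab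
  have hr0 : 0 < r := by positivity
  have hr1 : r < 1 := (div_lt_one ha).2 (by exact_mod_cast hab)
  have hlim := tendsto_pow_const_mul_const_pow_of_abs_lt_one d (abs_lt.2 ⟨by linarith, hr1⟩)
  filter_upwards [hlim.eventually (gt_mem_nhds (by positivity : 0 < r ^ K / (c + 1))),
    Filter.eventually_ge_atTop K] with n hn hKn
  suffices (c * n ^ d * b ^ (n - K) : ℝ) < a ^ (n - K) by exact_mod_cast this
  have hb' : (b : ℝ) = r * a := (div_mul_cancel₀ _ ha.ne').symm
  have hsmall : (c + 1) * (n ^ d * r ^ n) < r ^ K := by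
    rwa [lt_div_iff₀ (by positivity), mul_comm] at hn
  have hX : (0 : ℝ) ≤ n ^ d * r ^ n / r ^ K * a ^ (n - K) := by positivity
  calc (c * n ^ d * b ^ (n - K) : ℝ) = c * (n ^ d * r ^ n / r ^ K * a ^ (n - K)) := by
        rw [hb', mul_pow, pow_sub₀ _ hr0.ne' hKn]
        ring
    _ ≤ (c + 1) * (n ^ d * r ^ n / r ^ K * a ^ (n - K)) := by gcongr; linarith
    _ = (c + 1) * (n ^ d * r ^ n) / r ^ K * a ^ (n - K) := by ring
    _ < 1 * a ^ (n - K) := by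
        gcongr
        exact (div_lt_one (by positivity)).2 hsmall
    _ = a ^ (n - K) := one_mul _

lemma eventually_count_lt {k ℓ : ℕ} (hk : 1 ≤ k) (hℓ : 1 ≤ ℓ) :
    ∀ᶠ n in Filter.atTop, (n + n).choose k * ((n - k).choose (n - k + 1 - ℓ) *
      (((k + 1) ^ (k + 1) - (k + 1).descFactorial (k + 1)) ^ (n - k + 1 - ℓ) *
        (k + 1) ^ (n * n - (k + 1) * (n - k + 1 - ℓ)))) < (k + 1) ^ (n * n) := by
  set q := k + 1
  have hlt : q.descFactorial q < q ^ q := Nat.descFactorial_lt_pow (by omega) (by omega)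
  have hD : 0 < q.descFactorial q := Nat.descFactorial_self q ▸ q.factorial_pos
  set B := q ^ q - q.descFactorial q
  filter_upwards [eventually_mul_pow_mul_pow_sub_lt (a := q ^ q) (b := B) (by omega) (by omega)
      (2 ^ k) (k + ℓ) (k + ℓ - 1),
    Filter.eventually_ge_atTop (k + ℓ)] with n hn hkn
  rw [show n - k + 1 - ℓ = n - (k + ℓ - 1) by omega]
  set r := n - (k + ℓ - 1)
  have hchoose : (n + n).choose k ≤ 2 ^ k * n ^ k :=
    (Nat.choose_le_pow _ _).trans_eq (by rw [← two_mul, mul_pow])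
  have hchoose' : (n - k).choose r ≤ n ^ ℓ := by
    rw [Nat.choose_symm_of_eq_add (show n - k = r + (ℓ - 1) by omega)]
    exact (Nat.choose_le_pow _ _).trans
      ((Nat.pow_le_pow_left (Nat.sub_le _ _) _).trans (Nat.pow_le_pow_right (by omega) (by omega)))
  have hsplit : q ^ (n * n) = (q ^ q) ^ r * q ^ (n * n - q * r) := by
    rw [← pow_mul, ← pow_add]
    have : q * r ≤ n * n := Nat.mul_le_mul (by omega) (by omega)
    congr 1
    omega
  calc _ ≤ 2 ^ k * n ^ k * (n ^ ℓ * (B ^ r * q ^ (n * n - q * r))) := by gcongr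
    _ = 2 ^ k * n ^ (k + ℓ) * B ^ r * q ^ (n * n - q * r) := by ring
    _ < (q ^ q) ^ r * q ^ (n * n - q * r) := by gcongr
    _ = q ^ (n * n) := hsplit.symm

lemma rainbowIndex_eq_of_forall_lt {V : Type*} {G : SimpleGraph V} {k ℓ t : ℕ}
    (hmem : ∃ c : Sym2 V → Fin t, HasRainbowSTrees G c k ℓ)
    (hlt : ∀ s < t, ∀ c : Sym2 V → Fin s, ¬ HasRainbowSTrees G c k ℓ) :
    rainbowIndex G k ℓ = t :=
  IsLeast.csInf_eq ⟨hmem, fun s ⟨c, hc⟩ => not_lt.1 fun h => hlt s h c hc⟩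

theorem rx_Knn_eq_succ (k ℓ : ℕ) (hk : 4 ≤ k) (hℓ : 1 ≤ ℓ) :
    ∃ N : ℕ, 0 < N ∧ ∀ n : ℕ, N ≤ n →
      rainbowIndex (completeBipartiteGraph (Fin n) (Fin n)) k ℓ = k + 1 := by
  obtain ⟨N, hN⟩ := Filter.eventually_atTop.1 <|
    (eventually_count_lt (by omega : 1 ≤ k) hℓ).and
      (Filter.eventually_gt_atTop (k ^ (k + 1) * (k - 2) + k))
  refine ⟨N + 1, N.succ_pos, fun n hn => ?_⟩
  obtain ⟨hcount, hlarge⟩ := hN n (by omega)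
  refine rainbowIndex_eq_of_forall_lt ?_ fun s hs c => ?_
  · exact exists_coloring_hasRainbowSTrees (m := n - k) (by rw [Fintype.card_fin]; omega)
      (by rw [Fintype.card_fin]; omega) (by simpa only [Fintype.card_fin] using hcount)
  · exact not_hasRainbowSTrees_completeBipartiteGraph hk hℓ (by rw [Fintype.card_fin]; omega)
      (by rw [Fintype.card_fin]; omega) (by rw [Fintype.card_fin]; omega) c
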